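/- arXiv:1206.4335 — 3 statements merged into one kernel-verified Lean document; each statement's English description precedes it below -/
import Mathlib

section
/- Let A be a ℤ-graded vector space and let H = ⊕_{n≥1} (⊗^n A[1]) / Σ_{p+q=n} Im(sh_{p,q}) be the quotient of the reduced tensor space on A[1] by the images of all shuffle products. Then the coproduct δ defined on H by δ(x_1⊗…⊗x_n) = Σ_{j=1}^{n-1} ( x_1⊗…⊗x_j ⊗ x_{j+1}⊗…⊗x_n − ε_x(τ) x_{j+1}⊗…⊗x_n ⊗ x_1⊗…⊗x_j ) is well defined, coantisymmetric (τ∘δ = −δ) and satisfies the coJacobi identity (id^{⊗3} + τ_{12}∘τ_{23} + τ_{23}∘τ_{12})∘(δ⊗id)∘δ = 0; that is, (H, δ) is a Lie cogebra. -/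
noncomputable section
namespace PG

open Finsupp

/-- Free `K`-module on the type `α`. -/
abbrev FM (K : Type) [Field K] (α : Type) : Type := α →₀ K

variable {K : Type} [Field K] {ι : Type}

/-- linear extension of a map defined on the canonical basis -/
def extL {α β : Type} (f : α → FM K β) : FM K α →ₗ[K] FM K β :=
  Finsupp.lift (FM K β) K α f

/-- the sign `(-1)^n` -/
def zsgn (K : Type) [Field K] (n : ℤ) : K := (-1 : K) ^ n

/-- sum of degrees of the entries of a list -/
def dsum {α : Type} (dg : α → ℤ) (l : List α) : ℤ := (l.map dg).sum

/-- enumerate the positions of a list: (prefix, element, suffix) -/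
def focuses {α : Type} : List α → List (List α × α × List α)
  | [] => []
  | a :: l => ([], a, l) :: (focuses l).map (fun t => (a :: t.1, t.2.1, t.2.2))

/-- sum of the values of `f` over a list -/
def fsum {α β : Type} [AddCommMonoid β] (l : List α) (f : α → β) : β := (l.map f).sum

/-- all splittings of a list into two complementary subsequences (I, J),
together with the Koszul sign of the corresponding unshuffle -/
def splits {α : Type} (K : Type) [Field K] (dg : α → ℤ) :
    List α → List (List α × List α × K)
  | [] => [([], [], 1)]
  | a :: l =>
      ((splits K dg l).map (fun t => (a :: t.1, t.2.1, t.2.2)))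
      ++ ((splits K dg l).map
          (fun t => (t.1, a :: t.2.1, zsgn K (dg a * dsum dg t.1) * t.2.2)))

/-- `x₁⋯xₙ ↦ Σ_t ± xₜ ⊗ (x₁⋯ x̂ₜ ⋯xₙ)` : canonical embedding of a symmetric word
into (generator) × (symmetric word), with Koszul signs. -/
def symEmb {α : Type} (K : Type) [Field K] (dg : α → ℤ) : List α → FM K (α × List α)
  | [] => 0
  | a :: l => Finsupp.single (a, l) 1
      + (symEmb K dg l).sum
          (fun b c => (c * zsgn K (dg b.1 * dg a)) • Finsupp.single (b.1, a :: b.2) 1)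

/-- the cofree permutative coproduct on (head) ⊗ (symmetric word):
`Δ(x₀ ⊗ x₁⋯xₙ) = Σ_{I ⊔ J, J≠∅} ε (x₀ ⊗ x_I) ⊗ x_J` (second factor expanded by `symEmb`). -/
def permDelta {α : Type} (K : Type) [Field K] (dg : α → ℤ) (b : α × List α) :
    FM K ((α × List α) × (α × List α)) :=
  fsum (splits K dg b.2) (fun t =>
    match t.2.1 with
    | [] => 0
    | _ => t.2.2 • Finsupp.mapDomain (fun e => ((b.1, t.1), e)) (symEmb K dg t.2.1))

/-- the graded (Koszul-signed) shuffle product on words -/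
def shf (K : Type) [Field K] (ds : ι → ℤ) : List ι → List ι → FM K (List ι)
  | [], v => Finsupp.single v 1
  | u, [] => Finsupp.single u 1
  | a :: u, b :: v =>
      Finsupp.mapDomain (a :: ·) (shf K ds u (b :: v))
      + zsgn K (ds b * dsum ds (a :: u)) • Finsupp.mapDomain (b :: ·) (shf K ds (a :: u) v)
  termination_by u v => u.length + v.length

/-- the iterated signed antisymmetrisation μₙ : μ₁ = id,
μ_{n+1} = μ_n ⊗ id − (μ_n ⊗ id) ∘ τ_{n+1}⁻¹ (Koszul-signed cyclic action). -/
def mu (K : Type) [Field K] (ds : ι → ℤ) : List ι → FM K (List ι)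
  | [] => 0
  | [a] => Finsupp.single [a] 1
  | a :: b :: l =>
      Finsupp.mapDomain (fun w => w ++ [(b :: l).getLast (List.cons_ne_nil _ _)])
        (mu K ds ((a :: b :: l).dropLast))
      - zsgn K (ds a * dsum ds (b :: l)) •
          Finsupp.mapDomain (fun w => w ++ [a]) (mu K ds (b :: l))
  termination_by w => w.length
  decreasing_by
  · simp
  · simp

/-- prepend a general vector (an element of the free module on `ι`) to words -/
def consV (g : FM K ι) (m : FM K (List ι)) : FM K (List ι) :=
  g.sum fun i c => c • Finsupp.mapDomain (i :: ·) m

/-- the nontrivial deconcatenations of a word -/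
def cuts {α : Type} (w : List α) : List (List α × List α) :=
  (List.range (w.length - 1)).map (fun k => (w.take (k + 1), w.drop (k + 1)))

/-- the Koszul crossing exponent of a list of positions (each position `i`
carries the degree `degs i`): sum over inversions of products of degrees. -/
def crossExp (degs : ℕ → ℤ) : List ℕ → ℤ
  | [] => 0
  | a :: l => ((l.filter (fun b => decide (b < a))).map (fun b => degs a * degs b)).sum
      + crossExp degs l

/-- degree of the letter at position `i` of the word `w` -/
def posDeg (ds : ι → ℤ) (w : List ι) (i : ℕ) : ℤ := (w.map ds).getD i 0

/-- subword of `w` on the set of positions `S` (kept in increasing order) -/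
def subw (w : List ι) (S : Finset ℕ) : List ι :=
  ((w.zipIdx.map Prod.swap).filter (fun p => decide (p.1 ∈ S))).map Prod.snd

/-- the Koszul sign of the unshuffle of `w` rearranging its letters in the
order of positions given by `out` -/
def unshSgn (K : Type) [Field K] (ds : ι → ℤ) (w : List ι) (out : List ℕ) : K :=
  zsgn K (crossExp (posDeg ds w) out)

/-- submodule spanned by a set of relations -/
def idealOf {α : Type} (S : Set (FM K α)) : Submodule K (FM K α) := Submodule.span K S

/-- the span, in the free module on `α × α`, of the relations of `S` put in either factor -/
def idealPair {α : Type} (S : Set (FM K α)) : Submodule K (FM K (α × α)) :=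
  Submodule.span K
    ({x | ∃ c, ∃ p ∈ S, x = Finsupp.mapDomain (fun a => (a, c)) p} ∪
     {x | ∃ c, ∃ p ∈ S, x = Finsupp.mapDomain (fun a => (c, a)) p})

/-- the span, in the free module on `α × α × α`, of the relations of `S` put in any factor -/
def idealTriple {α : Type} (S : Set (FM K α)) : Submodule K (FM K (α × α × α)) :=
  Submodule.span K
    ({x | ∃ c d, ∃ p ∈ S, x = Finsupp.mapDomain (fun a => (a, c, d)) p} ∪
     ({x | ∃ c d, ∃ p ∈ S, x = Finsupp.mapDomain (fun a => (c, a, d)) p} ∪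
      {x | ∃ c d, ∃ p ∈ S, x = Finsupp.mapDomain (fun a => (c, d, a)) p}))

/-- graded-symmetry relations on words: `⋯ab⋯ − (−1)^{deg a · deg b} ⋯ba⋯` -/
def symRelW (K : Type) [Field K] (ds : ι → ℤ) : Set (FM K (List ι)) :=
  {x | ∃ u : List ι, ∃ a b : ι, ∃ v : List ι,
    x = Finsupp.single (u ++ a :: b :: v) 1
      - zsgn K (ds a * ds b) • Finsupp.single (u ++ b :: a :: v) 1}

/-- shuffle relations: the images of all the shuffle products `sh_{p,q}`, `p,q ≥ 1` -/
def shRel (K : Type) [Field K] (ds : ι → ℤ) : Set (FM K (List ι)) :=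
  {x | ∃ u v : List ι, u ≠ [] ∧ v ≠ [] ∧ x = shf K ds u v}

/-- graded-symmetry relations in the `List` (symmetric-word) part of `α × List α` -/
def symRelP {α : Type} (K : Type) [Field K] (dg : α → ℤ) : Set (FM K (α × List α)) :=
  {x | ∃ h : α, ∃ l1 : List α, ∃ u v : α, ∃ l2 : List α,
    x = Finsupp.single (h, l1 ++ u :: v :: l2) 1
      - zsgn K (dg u * dg v) • Finsupp.single (h, l1 ++ v :: u :: l2) 1}

/-- the graded flip on the free module on `α × α` -/
def tauP {α : Type} (K : Type) [Field K] (dg : α → ℤ) :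
    FM K (α × α) →ₗ[K] FM K (α × α) :=
  extL (fun p => zsgn K (dg p.1 * dg p.2) • Finsupp.single (p.2, p.1) 1)

/-- τ₁₂ = τ ⊗ id on triples -/
def tau12 {α : Type} (K : Type) [Field K] (dg : α → ℤ) :
    FM K (α × α × α) →ₗ[K] FM K (α × α × α) :=
  extL (fun p => zsgn K (dg p.1 * dg p.2.1) • Finsupp.single (p.2.1, p.1, p.2.2) 1)

/-- τ₂₃ = id ⊗ τ on triples -/
def tau23 {α : Type} (K : Type) [Field K] (dg : α → ℤ) :
    FM K (α × α × α) →ₗ[K] FM K (α × α × α) :=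
  extL (fun p => zsgn K (dg p.2.1 * dg p.2.2) • Finsupp.single (p.1, p.2.2, p.2.1) 1)

/-- `f ⊗ id` for a map `f` with values in two factors (no Koszul sign) -/
def firstT {α : Type} (f : α → FM K (α × α)) :
    FM K (α × α) →ₗ[K] FM K (α × α × α) :=
  extL (fun p => Finsupp.mapDomain (fun q => (q.1, q.2, p.2)) (f p.1))

/-- `id ⊗ f` for a map `f` of degree `degf` with values in two factors (Koszul sign) -/
def secondT {α : Type} (dg : α → ℤ) (degf : ℤ) (f : α → FM K (α × α)) :
    FM K (α × α) →ₗ[K] FM K (α × α × α) :=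
  extL (fun p => zsgn K (degf * dg p.1) •
    Finsupp.mapDomain (fun q => (p.1, q.1, q.2)) (f p.2))

/-- `f ⊗ id + id ⊗ f` for a coderivation-type map `f` of degree `degf` (Koszul sign) -/
def coderT {α : Type} (dg : α → ℤ) (degf : ℤ) (f : α → FM K α) :
    FM K (α × α) →ₗ[K] FM K (α × α) :=
  extL (fun p => Finsupp.mapDomain (fun q => (q, p.2)) (f p.1)
      + zsgn K (degf * dg p.1) • Finsupp.mapDomain (fun q => (p.1, q)) (f p.2))

/-- homogeneity of an element of the free module on `α`, w.r.t. a degree on `α` -/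
def IsHomog {α : Type} (dg : α → ℤ) (x : FM K α) (n : ℤ) : Prop :=
  ∀ a ∈ x.support, dg a = n


/-! ### coproducts on words -/

/-- the unshuffle coproduct of the cocommutative coassociative cogebra
`S⁺(g[1])` (on word representatives):
`Δ(x₁⋯xₙ) = Σ_{I⊔J=[n], I,J≠∅} ε_x(I,J) x_I ⊗ x_J`. -/
def sDelta (K : Type) [Field K] (ds : ι → ℤ) (w : List ι) : FM K (List ι × List ι) :=
  ∑ S ∈ (Finset.range w.length).powerset.filter
      (fun S => S ≠ ∅ ∧ S ≠ Finset.range w.length),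
    unshSgn K ds w
        (S.sort (· ≤ ·) ++ ((Finset.range w.length \ S).sort (· ≤ ·))) •
      Finsupp.single (subw w S, subw w (Finset.range w.length \ S)) 1

/-- the antisymmetrised deconcatenation cocrochet
`δ(x₁⊗…⊗xₙ) = Σ_j (x₁…x_j) ⊗ (x_{j+1}…xₙ) − ε (x_{j+1}…xₙ) ⊗ (x₁…x_j)`. -/
def lieDelta (K : Type) [Field K] (ds : ι → ℤ) (w : List ι) :
    FM K (List ι × List ι) :=
  fsum (cuts w) (fun p =>
    Finsupp.single p 1
      - zsgn K (dsum ds p.1 * dsum ds p.2) • Finsupp.single (p.2, p.1) 1)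

/-- the cofree Leibniz cogebra coproduct on `T⁺(V[1])`:
`δ(x₁⊗…⊗xₙ) = Σ_k (x₁⊗…⊗x_k) ⊗ μ_{n-k}(x_{k+1}⊗…⊗xₙ)`. -/
def leibDelta (K : Type) [Field K] (ds : ι → ℤ) (w : List ι) :
    FM K (List ι × List ι) :=
  fsum (cuts w) (fun p => Finsupp.mapDomain (fun m => (p.1, m)) (mu K ds p.2))

/-! ### coderivation-type operators on words -/

/-- `Σ_k ± x₁⊗…⊗q₁(x_k)⊗…⊗xₙ` with Koszul prefix signs `(-1)^{Σ_{i<k} deg xᵢ}` -/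
def repl1 (K : Type) [Field K] (ds : ι → ℤ) (q1 : ι → FM K ι) :
    List ι → FM K (List ι)
  | [] => 0
  | a :: l => (q1 a).sum (fun i c => c • Finsupp.single (i :: l) 1)
      + zsgn K (ds a) • Finsupp.mapDomain (a :: ·) (repl1 K ds q1 l)

/-- `Σ_k ± x₁⊗…⊗q₂(x_k,x_{k+1})⊗…⊗xₙ` (collapse of every adjacent pair) with
Koszul prefix signs -/
def repl2 (K : Type) [Field K] (ds : ι → ℤ) (q2 : ι → ι → FM K ι) :
    List ι → FM K (List ι)
  | [] => 0
  | [_] => 0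
  | a :: b :: l => (q2 a b).sum (fun i c => c • Finsupp.single (i :: l) 1)
      + zsgn K (ds a) • Finsupp.mapDomain (a :: ·) (repl2 K ds q2 (b :: l))

/-- collapse the leading pair with `q2h`, and every interior pair with `q2i` -/
def headInt (K : Type) [Field K] (ds : ι → ℤ) (q2h q2i : ι → ι → FM K ι) :
    List ι → FM K (List ι)
  | [] => 0
  | [_] => 0
  | a :: b :: l => (q2h a b).sum (fun i c => c • Finsupp.single (i :: l) 1)
      + zsgn K (ds a) • Finsupp.mapDomain (a :: ·) (repl2 K ds q2i (b :: l))

/-- `D₂(α,β) = (−1)^{deg α} α∧β` on basis letters -/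
def d2of (K : Type) [Field K] (ds : ι → ℤ) (w2 : ι → ι → FM K ι) (a b : ι) : FM K ι :=
  zsgn K (ds a) • w2 a b

/-- `D₂∘μ₂(α,β) = D₂(α,β) − (−1)^{deg α · deg β} D₂(β,α)` on basis letters -/
def d2mu (K : Type) [Field K] (ds : ι → ℤ) (w2 : ι → ι → FM K ι) (a b : ι) : FM K ι :=
  d2of K ds w2 a b - zsgn K (ds a * ds b) • d2of K ds w2 b a

/-- the codifferential of the Leibniz cogebra `T⁺(𝒢[1])` determined by a product
`∧` (no differential part):
`D(α₁⊗…⊗αₙ) = D₂(α₁,α₂)⊗α₃⊗…⊗αₙ + Σ_k ± α₁⊗…⊗(D₂∘μ₂)(α_k,α_{k+1})⊗…⊗αₙ` -/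
def Dpre (K : Type) [Field K] (ds : ι → ℤ) (w2 : ι → ι → FM K ι) :
    List ι → FM K (List ι) :=
  headInt K ds (d2of K ds w2) (d2mu K ds w2)

/-! ### the extended bracket and the extension `R₂` of a pre-Lie product -/

/-- the extension of a degree −1 bracket `b2` to words:
`[X,Y] = Σ_{shuffles, adjacent pair (x from X, y from Y)} ± …⊗[x,y]⊗…` -/
def brS (K : Type) [Field K] (ds : ι → ℤ) (b2 : ι → ι → FM K ι) :
    List ι → List ι → FM K (List ι)
  | [], _ => 0
  | _, [] => 0
  | a :: u, b :: v =>
      Finsupp.mapDomain (a :: ·) (brS K ds b2 u (b :: v))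
      + zsgn K (ds b * dsum ds (a :: u)) •
          Finsupp.mapDomain (b :: ·) (brS K ds b2 (a :: u) v)
      + zsgn K (ds b * dsum ds u) • consV (b2 a b) (shf K ds u v)
  termination_by u v => u.length + v.length

/-- the bracketed tail terms of `R₂`:
`Σ_k u₁⊗…⊗u_{k-1}⊗[u_k,b]⊗sh(u_{k+1}…, v)` with signs -/
def r2brTail (K : Type) [Field K] (ds : ι → ℤ) (b2 : ι → ι → FM K ι) :
    List ι → ι → List ι → FM K (List ι)
  | [], _, _ => 0
  | x :: u, b, v =>
      zsgn K (ds b * dsum ds u) • consV (b2 x b) (shf K ds u v)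
      + Finsupp.mapDomain (x :: ·) (r2brTail K ds b2 u b v)

/-- `[α,β] = α◇β − (−1)^{deg α · deg β} β◇α` on basis letters -/
def brOf (K : Type) [Field K] (ds : ι → ℤ) (dia2 : ι → ι → FM K ι) (a b : ι) : FM K ι :=
  dia2 a b - zsgn K (ds a * ds b) • dia2 b a

/-- the extension `R₂` of the pre-Lie product `◇` to `T⁺(𝒢[1])`:
`R₂(α₁⊗…⊗αₚ, α_{p+1}⊗…⊗α_{p+q}) = ±(α₁◇α_{p+1})⊗sh(…) + Σ_k ± α₁⊗…⊗[α_k,α_{p+1}]⊗sh(…)` -/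
def R2w (K : Type) [Field K] (ds : ι → ℤ) (dia2 : ι → ι → FM K ι) :
    List ι → List ι → FM K (List ι)
  | [], _ => 0
  | _, [] => 0
  | a :: u, b :: v =>
      zsgn K (ds b * dsum ds u) • consV (dia2 a b) (shf K ds u v)
      + Finsupp.mapDomain (a :: ·) (r2brTail K ds (brOf K ds dia2) u b v)


/-! ### the construction on `H[1] ⊗ S(H[1])`, where `H = T⁺(𝒢[1])` -/

/-- the twice-shifted degree `deg'(X) = deg(X) − 1` of a word `X ∈ H[1]` -/
def dgp (ds : ι → ℤ) (w : List ι) : ℤ := dsum ds w - 1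

/-- basis of (word representatives of) `H[1] ⊗ S(H[1])` : a head word and a
list of factor words -/
abbrev BB (ι : Type) : Type := List ι × List (List ι)

/-- the `deg'`-degree of a basis element of `H[1] ⊗ S(H[1])` -/
def degB (ds : ι → ℤ) (b : BB ι) : ℤ := dgp ds b.1 + dsum (dgp ds) b.2

/-- embed a symmetric product whose first factor is a general element of `H` -/
def symEmbV (K : Type) [Field K] (ds : ι → ℤ) (g : FM K (List ι))
    (L : List (List ι)) : FM K (BB ι) :=
  g.sum fun w c => c • symEmb K (dgp ds) (w :: L)

/-- the coderivation `m` of `H[1] ⊗ S(H[1])` extending the codifferential `D` of `H`: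
`m(X₀⊗X₁⋯Xₙ) = D(X₀)⊗X₁⋯Xₙ + (−1)^{x₀'} Σ_j ± X₀⊗D(X_j)·X₁⋯ĵ⋯Xₙ` -/
def mB (K : Type) [Field K] (ds : ι → ℤ) (w2 : ι → ι → FM K ι) (b : BB ι) :
    FM K (BB ι) :=
  (Dpre K ds w2 b.1).sum (fun w c => c • Finsupp.single (w, b.2) 1)
  + zsgn K (dgp ds b.1) • fsum (focuses b.2) (fun t =>
      zsgn K (dgp ds t.2.1 * dsum (dgp ds) t.1) •
        (Dpre K ds w2 t.2.1).sum
          (fun w c => c • Finsupp.single (b.1, w :: (t.1 ++ t.2.2)) 1))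

/-- `R₂'(X,Y) = (−1)^{deg' X} R₂(X,Y)` -/
def R2p (K : Type) [Field K] (ds : ι → ℤ) (dia2 : ι → ι → FM K ι)
    (X Y : List ι) : FM K (List ι) :=
  zsgn K (dgp ds X) • R2w K ds dia2 X Y

/-- `ℓ₂(X,Y) = R₂'(X,Y) + (−1)^{deg'X · deg'Y} R₂'(Y,X)` -/
def ell2 (K : Type) [Field K] (ds : ι → ℤ) (dia2 : ι → ι → FM K ι)
    (X Y : List ι) : FM K (List ι) :=
  R2p K ds dia2 X Y + zsgn K (dgp ds X * dgp ds Y) • R2p K ds dia2 Y X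

/-- the coderivation `R` of `H[1] ⊗ S(H[1])` extending `R₂'`:
`R(X₀⊗X₁⋯Xₙ) = Σ_i ± R₂'(X₀,X_i)⊗X₁⋯î⋯Xₙ + (−1)^{x₀'} Σ_{i<j} ± X₀⊗ℓ₂(X_i,X_j)·X₁⋯îĵ⋯Xₙ` -/
def RB (K : Type) [Field K] (ds : ι → ℤ) (dia2 : ι → ι → FM K ι) (b : BB ι) :
    FM K (BB ι) :=
  fsum (focuses b.2) (fun t =>
    zsgn K (dgp ds t.2.1 * dsum (dgp ds) t.1) •
      (R2p K ds dia2 b.1 t.2.1).sum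
        (fun w c => c • Finsupp.single (w, t.1 ++ t.2.2) 1))
  + zsgn K (dgp ds b.1) • fsum (focuses b.2) (fun t1 =>
      fsum (focuses t1.2.2) (fun t2 =>
        zsgn K (dgp ds t1.2.1 * dsum (dgp ds) t1.1
            + dgp ds t2.2.1 * (dsum (dgp ds) t1.1 + dsum (dgp ds) t2.1)) •
          (ell2 K ds dia2 t1.2.1 t2.2.1).sum
            (fun w c => c • Finsupp.single (b.1, w :: (t1.1 ++ t2.1 ++ t2.2.2)) 1)))

/-- the Leibniz-type coproduct `κ` on `H[1] ⊗ S(H[1])`: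
`κ(X₀⊗X₁⋯Xₙ) = Σ_{U₀⊗V₀=X₀, I⊔J} (−1)^{u₀'} ( ε (U₀⊗X_I) ⊗ μV₀·X_J
+ ε (μV₀⊗X_J) ⊗ U₀·X_I ) + (−1)^{x₀'} X₀⊗κ'(X₁⋯Xₙ)` -/
def kappaB (K : Type) [Field K] (ds : ι → ℤ) (b : BB ι) :
    FM K (BB ι × BB ι) :=
  fsum (cuts b.1) (fun uv =>
    fsum (splits K (dgp ds) b.2) (fun t =>
      (zsgn K (dgp ds uv.1) * t.2.2 * zsgn K (dgp ds uv.2 * dsum (dgp ds) t.1)) •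
        Finsupp.mapDomain (fun e => ((uv.1, t.1), e))
          (symEmbV K ds (mu K ds uv.2) t.2.1)
      + (zsgn K (dgp ds uv.1) * t.2.2 * zsgn K (dgp ds uv.1 * dgp ds uv.2)
            * zsgn K (dgp ds uv.1 * dsum (dgp ds) t.1)) •
          (mu K ds uv.2).sum (fun m c =>
            c • Finsupp.mapDomain (fun e => ((m, t.1), e))
                  (symEmb K (dgp ds) (uv.1 :: t.2.1)))))
  + zsgn K (dgp ds b.1) • fsum (focuses b.2) (fun tf =>
      fsum (cuts tf.2.1) (fun uv =>
        fsum (splits K (dgp ds) tf.1) (fun tp =>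
          fsum (splits K (dgp ds) tf.2.2) (fun tq =>
            (zsgn K (dsum (dgp ds) tf.1) * zsgn K (dgp ds uv.1)
                * tp.2.2 * tq.2.2
                * zsgn K (dsum (dgp ds) tp.2.1 * dsum (dgp ds) tq.1
                    + dgp ds tf.2.1 * (dsum (dgp ds) tp.2.1 + dsum (dgp ds) tq.1))
                * zsgn K (dsum (dgp ds) tp.2.1 + dsum (dgp ds) tq.1)) •
              (Finsupp.mapDomain (fun e => ((b.1, tp.1 ++ tq.1 ++ [uv.1]), e))
                  (symEmbV K ds (mu K ds uv.2) (tp.2.1 ++ tq.2.1))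
               + zsgn K (dgp ds uv.1 * dgp ds uv.2) •
                  (mu K ds uv.2).sum (fun m c =>
                    c • Finsupp.mapDomain (fun e => ((b.1, tp.1 ++ tq.1 ++ [m]), e))
                          (symEmb K (dgp ds) (uv.1 :: (tp.2.1 ++ tq.2.1)))))))))

/-!
Write `Δ` for the full deconcatenation `w ↦ Σₖ w_{≤k} ⊗ w_{>k}` and `Δ'` for its part with both
factors nonempty, so that `δ = Δ' − τ Δ'`. Deconcatenation is multiplicative for the shuffle
product: `Δ (sh(u, v)) = Σ_{k,l} ± sh(u_{≤k}, v_{≤l}) ⊗ sh(u_{>k}, v_{>l})`. For nonempty `u` and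
`v` every term except those at `(k, l) = (|u|, 0)` and `(0, |v|)` has a shuffle relation in one of
its factors, so `Δ (sh(u, v))`, and with it `Δ' (sh(u, v))`, is `≡ u ⊗ v ± v ⊗ u`. This element is
`τ`-invariant and the relations are `τ`-stable (shuffles are homogeneous), hence
`δ (sh(u, v)) ≡ 0`.

Coantisymmetry and the coJacobi identity already hold on words: `(δ ⊗ id) δ w` is a sum over the
cuttings of `w` into three nonempty pieces, and the contribution of each cutting cancels against
its images under the cyclic permutations `τ₁₂ τ₂₃` and `τ₂₃ τ₁₂`.
-/

variable {α β γ : Type}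

lemma zsgn_add (m n : ℤ) : zsgn K (m + n) = zsgn K m * zsgn K n :=
  zpow_add₀ (by norm_num) m n

lemma zsgn_zero : zsgn K 0 = 1 := zpow_zero _

lemma zsgn_mul_self (n : ℤ) : zsgn K n * zsgn K n = 1 := by
  rw [← zsgn_add, ← two_mul, zsgn, zpow_mul]
  norm_num

lemma dsum_cons (dg : α → ℤ) (a : α) (l : List α) : dsum dg (a :: l) = dg a + dsum dg l := by
  simp [dsum]

lemma dsum_append (dg : α → ℤ) (l₁ l₂ : List α) :
    dsum dg (l₁ ++ l₂) = dsum dg l₁ + dsum dg l₂ := by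
  simp [dsum]

lemma dsum_perm (dg : α → ℤ) {l₁ l₂ : List α} (h : l₁.Perm l₂) : dsum dg l₁ = dsum dg l₂ :=
  (h.map dg).sum_eq

section fsum

variable {M : Type} [AddCommMonoid M]

lemma fsum_nil (f : α → M) : fsum [] f = 0 := rfl

lemma fsum_cons (a : α) (l : List α) (f : α → M) : fsum (a :: l) f = f a + fsum l f := by
  simp [fsum]

lemma fsum_append (l₁ l₂ : List α) (f : α → M) : fsum (l₁ ++ l₂) f = fsum l₁ f + fsum l₂ f := by
  simp [fsum]

lemma fsum_map (l : List α) (g : α → β) (f : β → M) :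
    fsum (l.map g) f = fsum l (fun a => f (g a)) := by
  simp [fsum, Function.comp_def]

lemma fsum_congr {l : List α} {f g : α → M} (h : ∀ a ∈ l, f a = g a) : fsum l f = fsum l g := by
  rw [fsum, fsum, List.map_congr_left h]

lemma map_fsum {N H : Type} [AddCommMonoid N] [FunLike H M N] [AddMonoidHomClass H M N]
    (φ : H) (l : List α) (f : α → M) : φ (fsum l f) = fsum l (fun a => φ (f a)) := by
  simp [fsum, map_list_sum, Function.comp_def]

lemma fsum_add (l : List α) (f g : α → M) :
    fsum l (fun a => f a + g a) = fsum l f + fsum l g :=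
  List.sum_map_add

lemma fsum_sub {G : Type} [AddCommGroup G] (l : List α) (f g : α → G) :
    fsum l (fun a => f a - g a) = fsum l f - fsum l g := by
  induction l with
  | nil => simp [fsum]
  | cons a l ih => simp only [fsum_cons, ih]; abel

lemma smul_fsum (c : K) [Module K M] (l : List α) (f : α → M) :
    c • fsum l f = fsum l (fun a => c • f a) :=
  map_fsum (DistribSMul.toAddMonoidHom M c) l f

lemma mapDomain_fsum (g : β → γ) (l : List α) (f : α → β →₀ M) :
    mapDomain g (fsum l f) = fsum l fun a => mapDomain g (f a) :=
  map_fsum (mapDomain.addMonoidHom g) l f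

end fsum

lemma extL_apply (f : α → FM K β) (x : FM K α) : extL f x = x.sum fun a c => c • f a :=
  Finsupp.lift_apply _ _ _ _ _

lemma extL_single (f : α → FM K β) (a : α) (c : K) : extL f (single a c) = c • f a := by
  simp [extL]

lemma extL_mapDomain (f : β → FM K γ) (g : α → β) (x : FM K α) :
    extL f (mapDomain g x) = extL (fun a => f (g a)) x := by
  rw [extL_apply, extL_apply]
  exact sum_mapDomain_index (by simp) (fun _ _ _ => add_smul _ _ _)

lemma extL_congr_support {f g : α → FM K β} {x : FM K α} (h : ∀ a ∈ x.support, f a = g a) :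
    extL f x = extL g x := by
  rw [extL_apply, extL_apply]
  exact Finsupp.sum_congr fun a ha => by rw [h a ha]

lemma extL_fun_add (f g : α → FM K β) (x : FM K α) :
    extL (fun a => f a + g a) x = extL f x + extL g x := by
  simp [extL]

lemma extL_fun_sub (f g : α → FM K β) (x : FM K α) :
    extL (fun a => f a - g a) x = extL f x - extL g x := by
  rw [extL_apply, extL_apply, extL_apply, ← Finsupp.sum_sub]
  exact Finsupp.sum_congr fun a _ => smul_sub _ _ _

lemma extL_fun_smul (c : K) (f : α → FM K β) (x : FM K α) :
    extL (fun a => c • f a) x = c • extL f x := by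
  rw [extL_apply, extL_apply, Finsupp.smul_sum]
  exact Finsupp.sum_congr fun a _ => smul_comm _ _ _

lemma extL_linearMap (L : FM K β →ₗ[K] FM K γ) (f : α → FM K β) (x : FM K α) :
    extL (fun a => L (f a)) x = L (extL f x) := by
  simp [extL, Finsupp.lift_apply, map_finsuppSum]

lemma extL_mapDomain_fun (f : α → FM K β) (g : β → γ) (x : FM K α) :
    extL (fun a => mapDomain g (f a)) x = mapDomain g (extL f x) :=
  extL_linearMap (lmapDomain K K g) f x

lemma extL_single_one (g : α → β) (x : FM K α) :
    extL (fun a => single (g a) (1 : K)) x = mapDomain g x := by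
  simp [extL, Finsupp.lift_apply, mapDomain]

def tmul (X : FM K α) (Y : FM K β) : FM K (α × β) :=
  extL (fun x => mapDomain (Prod.mk x) Y) X

lemma tmul_single_one_left (x : α) (Y : FM K β) :
    tmul (single x (1 : K)) Y = mapDomain (Prod.mk x) Y := by
  rw [tmul, extL_single, one_smul]

lemma tmul_single_one_right (X : FM K α) (y : β) :
    tmul X (single y (1 : K)) = mapDomain (fun x => (x, y)) X := by
  rw [tmul, ← extL_single_one]
  exact extL_congr_support fun a _ => mapDomain_single

lemma tmul_add_left (X₁ X₂ : FM K α) (Y : FM K β) :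
    tmul (X₁ + X₂) Y = tmul X₁ Y + tmul X₂ Y :=
  map_add _ _ _

lemma tmul_smul_left (c : K) (X : FM K α) (Y : FM K β) : tmul (c • X) Y = c • tmul X Y :=
  map_smul _ _ _

lemma mapDomain_tmul_left (g : α → γ) (X : FM K α) (Y : FM K β) :
    mapDomain (fun p => (g p.1, p.2)) (tmul X Y) = tmul (mapDomain g X) Y := by
  rw [tmul, tmul, extL_mapDomain, ← extL_mapDomain_fun]
  refine extL_congr_support fun a _ => ?_
  rw [← mapDomain_comp]
  rfl

lemma tmul_eq_extL_right (X : FM K α) (Y : FM K β) :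
    tmul X Y = extL (fun y => mapDomain (fun x => (x, y)) X) Y := by
  simp only [tmul, extL_apply, mapDomain, Finsupp.smul_sum, smul_single, smul_eq_mul]
  rw [Finsupp.sum_comm]
  simp only [mul_comm]

lemma tmul_mem_idealPair_left {S : Set (FM K α)} {p : FM K α} (hp : p ∈ S) (Y : FM K α) :
    tmul p Y ∈ idealPair S := by
  rw [tmul_eq_extL_right, extL_apply]
  exact Submodule.finsuppSum_mem _ _ _ _ fun y _ => Submodule.smul_mem _ _
    (Submodule.subset_span (Or.inl ⟨y, p, hp, rfl⟩))

lemma tmul_mem_idealPair_right {S : Set (FM K α)} {p : FM K α} (hp : p ∈ S) (X : FM K α) :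
    tmul X p ∈ idealPair S := by
  rw [tmul, extL_apply]
  exact Submodule.finsuppSum_mem _ _ _ _ fun x _ => Submodule.smul_mem _ _
    (Submodule.subset_span (Or.inr ⟨x, p, hp, rfl⟩))

lemma tauP_single (dg : α → ℤ) (p : α × α) :
    tauP K dg (single p 1) = zsgn K (dg p.1 * dg p.2) • single (p.2, p.1) 1 := by
  rw [tauP, extL_single, one_smul]

lemma tau12_single (dg : α → ℤ) (p : α × α × α) :
    tau12 K dg (single p 1) = zsgn K (dg p.1 * dg p.2.1) • single (p.2.1, p.1, p.2.2) 1 := by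
  rw [tau12, extL_single, one_smul]

lemma tau23_single (dg : α → ℤ) (p : α × α × α) :
    tau23 K dg (single p 1) = zsgn K (dg p.2.1 * dg p.2.2) • single (p.1, p.2.2, p.2.1) 1 := by
  rw [tau23, extL_single, one_smul]

lemma firstT_single (f : α → FM K (α × α)) (p : α × α) :
    firstT f (single p 1) = mapDomain (fun q => (q.1, q.2, p.2)) (f p.1) := by
  rw [firstT, extL_single, one_smul]

lemma tauP_single_add_flip (dg : α → ℤ) (a b : α) :
    tauP K dg (single (a, b) 1 + zsgn K (dg b * dg a) • single (b, a) 1)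
      = single (a, b) 1 + zsgn K (dg b * dg a) • single (b, a) 1 := by
  rw [map_add, map_smul, tauP_single, tauP_single, smul_smul, mul_comm (dg b), zsgn_mul_self,
    one_smul, add_comm]

lemma tauP_mapDomain_left {dg : α → ℤ} {p : FM K α} {n : ℤ} (hp : IsHomog dg p n) (c : α) :
    tauP K dg (mapDomain (fun a => (a, c)) p) = zsgn K (n * dg c) • mapDomain (Prod.mk c) p := by
  rw [tauP, extL_mapDomain, ← extL_single_one, ← extL_fun_smul]
  exact extL_congr_support fun a ha => by rw [hp a ha]

lemma tauP_mapDomain_right {dg : α → ℤ} {p : FM K α} {n : ℤ} (hp : IsHomog dg p n) (c : α) :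
    tauP K dg (mapDomain (Prod.mk c) p) = zsgn K (dg c * n) • mapDomain (fun a => (a, c)) p := by
  rw [tauP, extL_mapDomain, ← extL_single_one, ← extL_fun_smul]
  exact extL_congr_support fun a ha => by rw [hp a ha]

lemma tauP_mem_idealPair {dg : α → ℤ} {S : Set (FM K α)} (hS : ∀ p ∈ S, ∃ n, IsHomog dg p n)
    {x : FM K (α × α)} (hx : x ∈ idealPair S) : tauP K dg x ∈ idealPair S := by
  refine (Submodule.span_le (p := (idealPair S).comap (tauP K dg))).2 ?_ hx
  rintro _ (⟨c, p, hp, rfl⟩ | ⟨c, p, hp, rfl⟩) <;> obtain ⟨n, hn⟩ := hS p hp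
  · rw [SetLike.mem_coe, Submodule.mem_comap, tauP_mapDomain_left hn]
    exact Submodule.smul_mem _ _ (Submodule.subset_span (Or.inr ⟨c, p, hp, rfl⟩))
  · rw [SetLike.mem_coe, Submodule.mem_comap, tauP_mapDomain_right hn]
    exact Submodule.smul_mem _ _ (Submodule.subset_span (Or.inl ⟨c, p, hp, rfl⟩))

/-! ### Shuffles and deconcatenation -/

lemma shf_nil_left (ds : ι → ℤ) (v : List ι) : shf K ds [] v = single v 1 := by
  rw [shf]

lemma shf_nil_right (ds : ι → ℤ) (u : List ι) : shf K ds u [] = single u 1 := by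
  cases u <;> simp [shf]

lemma shf_cons_cons (ds : ι → ℤ) (a b : ι) (u v : List ι) :
    shf K ds (a :: u) (b :: v) = mapDomain (a :: ·) (shf K ds u (b :: v))
      + zsgn K (ds b * dsum ds (a :: u)) • mapDomain (b :: ·) (shf K ds (a :: u) v) := by
  rw [shf]

lemma perm_of_mem_support_shf (ds : ι → ℤ) :
    ∀ (u v : List ι), ∀ w ∈ (shf K ds u v).support, w.Perm (u ++ v)
  | [], v, w, hw => by
    rw [shf_nil_left] at hw
    rw [Finset.mem_singleton.1 (support_single_subset hw), List.nil_append]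
  | a :: u, [], w, hw => by
    rw [shf_nil_right] at hw
    rw [Finset.mem_singleton.1 (support_single_subset hw), List.append_nil]
  | a :: u, b :: v, w, hw => by
    classical
    rw [shf_cons_cons] at hw
    rcases Finset.mem_union.1 (support_add hw) with hw | hw
    · obtain ⟨w', hw', rfl⟩ := Finset.mem_image.1 (mapDomain_support hw)
      exact (perm_of_mem_support_shf ds u (b :: v) w' hw').cons a
    · obtain ⟨w', hw', rfl⟩ := Finset.mem_image.1 (mapDomain_support (support_smul hw))
      exact ((perm_of_mem_support_shf ds (a :: u) v w' hw').cons b).trans List.perm_middle.symm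

lemma shf_isHomog (ds : ι → ℤ) (u v : List ι) :
    IsHomog (dsum ds) (shf K ds u v) (dsum ds u + dsum ds v) := fun w hw => by
  rw [dsum_perm ds (perm_of_mem_support_shf ds u v w hw), dsum_append]

lemma ne_nil_of_mem_support_shf (ds : ι → ℤ) {u : List ι} (hu : u ≠ []) (v : List ι)
    {w : List ι} (hw : w ∈ (shf K ds u v).support) : w ≠ [] := by
  rintro rfl
  exact hu (List.append_eq_nil_iff.1 (perm_of_mem_support_shf ds u v [] hw).symm.eq_nil).1

lemma cuts_cons (x : α) {w : List α} (hw : w ≠ []) :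
    cuts (x :: w) = ([x], w) :: (cuts w).map (fun p => (x :: p.1, p.2)) := by
  have hl : (x :: w).length - 1 = (w.length - 1) + 1 := by
    have := List.length_pos_iff.2 hw
    simp only [List.length_cons]
    omega
  rw [cuts, hl, List.range_succ_eq_map]
  simp [cuts, Function.comp_def]

lemma mem_cuts {w : List α} {p : List α × List α} (hp : p ∈ cuts w) :
    p.1 ≠ [] ∧ p.2 ≠ [] ∧ p.1 ++ p.2 = w := by
  obtain ⟨k, hk, rfl⟩ := List.mem_map.1 hp
  rw [List.mem_range] at hk
  refine ⟨?_, ?_, List.take_append_drop _ _⟩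
  · simp only [ne_eq, List.take_eq_nil_iff]
    rintro (h | rfl) <;> simp_all
  · simp only [ne_eq, List.drop_eq_nil_iff]
    omega

lemma fsum_cuts {M : Type} [AddCommMonoid M] (w : List α) (f : List α × List α → M) :
    fsum (cuts w) f = ∑ k ∈ Finset.range (w.length - 1), f (w.take (k + 1), w.drop (k + 1)) := by
  rw [cuts, fsum_map]
  rfl

def deconcat (w : List α) : FM K (List α × List α) :=
  ∑ k ∈ Finset.range (w.length + 1), single (w.take k, w.drop k) 1

def cutsDelta (w : List α) : FM K (List α × List α) :=
  fsum (cuts w) fun p => single p 1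

lemma deconcat_cons (c : α) (w : List α) :
    deconcat (K := K) (c :: w)
      = single ([], c :: w) 1 + mapDomain (fun p => (c :: p.1, p.2)) (deconcat w) := by
  rw [deconcat, deconcat, List.length_cons, Finset.sum_range_succ', mapDomain_finsetSum, add_comm]
  simp [mapDomain_single]

lemma extL_deconcat_mapDomain_cons (c : α) (x : FM K (List α)) :
    extL deconcat (mapDomain (c :: ·) x)
      = mapDomain (fun w => ([], c :: w)) x
        + mapDomain (fun p => (c :: p.1, p.2)) (extL deconcat x) := by
  simp only [extL_mapDomain, deconcat_cons, extL_fun_add, extL_single_one, extL_mapDomain_fun]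

lemma cutsDelta_eq_deconcat_sub (w : List α) (hw : w ≠ []) :
    cutsDelta (K := K) w = deconcat w - single ([], w) 1 - single (w, []) 1 := by
  obtain ⟨n, hn⟩ : ∃ n, w.length = n + 1 := Nat.exists_eq_succ_of_ne_zero (by simpa using hw)
  rw [cutsDelta, fsum_cuts, deconcat, hn, Finset.sum_range_succ', Finset.sum_range_succ,
    ← hn, List.take_length, List.drop_length, hn]
  simp

def lieDeltaCut (ds : ι → ℤ) (p : List ι × List ι) : FM K (List ι × List ι) :=
  single p 1 - zsgn K (dsum ds p.1 * dsum ds p.2) • single (p.2, p.1) 1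

lemma lieDelta_eq_fsum (ds : ι → ℤ) (w : List ι) :
    lieDelta K ds w = fsum (cuts w) (lieDeltaCut ds) := rfl

lemma lieDelta_eq_sub_tauP (ds : ι → ℤ) (w : List ι) :
    lieDelta K ds w = cutsDelta w - tauP K (dsum ds) (cutsDelta w) := by
  rw [lieDelta_eq_fsum, cutsDelta, map_fsum, ← fsum_sub]
  simp only [tauP_single]
  rfl

lemma sum_range_sum_range_pascal {M : Type} [AddCommMonoid M] (m n : ℕ) (f A B : ℕ → ℕ → M)
    (C : M) (h00 : f 0 0 = C) (h0l : ∀ l, f 0 (l + 1) = B 0 l) (hk0 : ∀ k, f (k + 1) 0 = A k 0)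
    (hkl : ∀ k l, f (k + 1) (l + 1) = A k (l + 1) + B (k + 1) l) :
    ∑ k ∈ Finset.range (m + 1 + 1), ∑ l ∈ Finset.range (n + 1 + 1), f k l
      = C + ∑ k ∈ Finset.range (m + 1), ∑ l ∈ Finset.range (n + 1 + 1), A k l
        + ∑ k ∈ Finset.range (m + 1 + 1), ∑ l ∈ Finset.range (n + 1), B k l := by
  simp only [Finset.sum_range_succ' _ (n + 1), Finset.sum_range_succ' _ (m + 1), h00, h0l, hk0,
    hkl, Finset.sum_add_distrib]
  abel

def shfDeconcat (ds : ι → ℤ) (u v : List ι) : FM K (List ι × List ι) :=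
  ∑ k ∈ Finset.range (u.length + 1), ∑ l ∈ Finset.range (v.length + 1),
    zsgn K (dsum ds (v.take l) * dsum ds (u.drop k)) •
      tmul (shf K ds (u.take k) (v.take l)) (shf K ds (u.drop k) (v.drop l))

lemma shfDeconcat_cons_cons (ds : ι → ℤ) (a b : ι) (u v : List ι) :
    shfDeconcat (K := K) ds (a :: u) (b :: v)
      = mapDomain (Prod.mk []) (shf K ds (a :: u) (b :: v))
        + mapDomain (fun p => (a :: p.1, p.2)) (shfDeconcat ds u (b :: v))
        + zsgn K (ds b * dsum ds (a :: u)) •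
            mapDomain (fun p => (b :: p.1, p.2)) (shfDeconcat ds (a :: u) v) := by
  simp only [shfDeconcat, List.length_cons, mapDomain_finsetSum, mapDomain_smul, Finset.smul_sum,
    mapDomain_tmul_left]
  refine sum_range_sum_range_pascal _ _ _ _ _ _ ?_ (fun l => ?_) (fun k => ?_) (fun k l => ?_)
  · simp [dsum, zsgn_zero, shf_nil_left, tmul_single_one_left]
  · simp only [List.take_zero, List.drop_zero, List.take_succ_cons, List.drop_succ_cons,
      shf_nil_left, mapDomain_single, smul_smul, ← zsgn_add, dsum_cons]
    ring_nf
  · simp [shf_nil_right, mapDomain_single]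
  · have hsplit : dsum ds u = dsum ds (u.take k) + dsum ds (u.drop k) := by
      rw [← dsum_append, List.take_append_drop]
    simp only [List.take_succ_cons, List.drop_succ_cons, shf_cons_cons, tmul_add_left,
      tmul_smul_left, smul_add, smul_smul, ← zsgn_add, dsum_cons, hsplit]
    ring_nf

lemma extL_deconcat_shf (ds : ι → ℤ) :
    ∀ u v : List ι, extL deconcat (shf K ds u v) = shfDeconcat ds u v
  | [], v => by
    simp [shf_nil_left, extL_single, shfDeconcat, deconcat, dsum, zsgn_zero, tmul_single_one_left]
  | a :: u, [] => by
    simp [shf_nil_right, extL_single, shfDeconcat, deconcat, dsum, zsgn_zero, tmul_single_one_right]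
  | a :: u, b :: v => by
    rw [shf_cons_cons, map_add, map_smul, extL_deconcat_mapDomain_cons,
      extL_deconcat_mapDomain_cons, extL_deconcat_shf ds u (b :: v),
      extL_deconcat_shf ds (a :: u) v, shfDeconcat_cons_cons, shf_cons_cons, mapDomain_add,
      mapDomain_smul, ← mapDomain_comp, ← mapDomain_comp, smul_add]
    simp only [Function.comp_def]
    abel

/-! ### Well-definedness on the quotient -/

lemma shf_mem_shRel (ds : ι → ℤ) {u v : List ι} (hu : u ≠ []) (hv : v ≠ []) :
    shf K ds u v ∈ shRel K ds :=
  ⟨u, v, hu, hv, rfl⟩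

lemma shfDeconcat_term_mem (ds : ι → ℤ) {u v : List ι} (hu : u ≠ []) (hv : v ≠ []) {k l : ℕ}
    (hk : k ≤ u.length) (hl : l ≤ v.length) (h₁ : (k, l) ≠ (u.length, 0))
    (h₂ : (k, l) ≠ (0, v.length)) :
    tmul (shf K ds (u.take k) (v.take l)) (shf K ds (u.drop k) (v.drop l))
      ∈ idealPair (shRel K ds) := by
  have hu' : 0 < u.length := List.length_pos_iff.2 hu
  have hv' : 0 < v.length := List.length_pos_iff.2 hv
  by_cases hkl : k ≠ 0 ∧ l ≠ 0
  · refine tmul_mem_idealPair_left (shf_mem_shRel ds ?_ ?_) _ <;>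
      simp [List.take_eq_nil_iff, hkl, hu, hv]
  · refine tmul_mem_idealPair_right (shf_mem_shRel ds ?_ ?_) _ <;>
      simp only [ne_eq, List.drop_eq_nil_iff, not_le] <;>
      simp only [ne_eq, Prod.mk.injEq, not_and] at h₁ h₂ <;> omega

lemma shfDeconcat_sModEq (ds : ι → ℤ) {u v : List ι} (hu : u ≠ []) (hv : v ≠ []) :
    shfDeconcat ds u v ≡ single (u, v) 1 + zsgn K (dsum ds v * dsum ds u) • single (v, u) 1
      [SMOD idealPair (shRel K ds)] := by
  have hu' : u.length ≠ 0 := by simpa using hu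
  rw [SModEq.def, ← Submodule.mkQ_apply, ← Submodule.mkQ_apply, shfDeconcat,
    ← Finset.sum_product', map_sum, map_add,
    Finset.sum_eq_add_of_mem (u.length, 0) (0, v.length) (by simp) (by simp) (by simp [hu'])]
  · simp [shf_nil_left, shf_nil_right, tmul_single_one_left, dsum, zsgn_zero]
  · rintro ⟨k, l⟩ hkl ⟨h₁, h₂⟩
    rw [Finset.mem_product, Finset.mem_range, Finset.mem_range] at hkl
    rw [Submodule.mkQ_apply, Submodule.Quotient.mk_eq_zero]
    exact Submodule.smul_mem _ _
      (shfDeconcat_term_mem ds hu hv (by omega) (by omega) h₁ h₂)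

lemma extL_cutsDelta_shf_sModEq (ds : ι → ℤ) {u v : List ι} (hu : u ≠ []) (hv : v ≠ []) :
    extL cutsDelta (shf K ds u v)
      ≡ single (u, v) 1 + zsgn K (dsum ds v * dsum ds u) • single (v, u) 1
      [SMOD idealPair (shRel K ds)] := by
  have hshf : shf K ds u v ∈ shRel K ds := shf_mem_shRel ds hu hv
  have hcuts : extL cutsDelta (shf K ds u v) = shfDeconcat ds u v
      - tmul (single [] 1) (shf K ds u v) - tmul (shf K ds u v) (single [] 1) := by
    rw [extL_congr_support fun w hw =>
        cutsDelta_eq_deconcat_sub w (ne_nil_of_mem_support_shf ds hu v hw),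
      extL_fun_sub, extL_fun_sub, extL_deconcat_shf, extL_single_one, extL_single_one,
      tmul_single_one_left, tmul_single_one_right]
  have hleft : tmul (single [] 1) (shf K ds u v) ≡ 0 [SMOD idealPair (shRel K ds)] :=
    SModEq.sub_mem.2 (by simpa using tmul_mem_idealPair_right hshf _)
  have hright : tmul (shf K ds u v) (single [] 1) ≡ 0 [SMOD idealPair (shRel K ds)] :=
    SModEq.sub_mem.2 (by simpa using tmul_mem_idealPair_left hshf _)
  rw [hcuts]
  simpa using ((shfDeconcat_sModEq ds hu hv).sub hleft).sub hright

lemma shRel_isHomog (ds : ι → ℤ) : ∀ p ∈ shRel K ds, ∃ n, IsHomog (dsum ds) p n := by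
  rintro _ ⟨u, v, -, -, rfl⟩
  exact ⟨_, shf_isHomog ds u v⟩

lemma extL_lieDelta_shf_mem (ds : ι → ℤ) {u v : List ι} (hu : u ≠ []) (hv : v ≠ []) :
    extL (lieDelta K ds) (shf K ds u v) ∈ idealPair (shRel K ds) := by
  have hcuts := extL_cutsDelta_shf_sModEq (K := K) ds hu hv
  have hflip : tauP K (dsum ds) (extL cutsDelta (shf K ds u v))
      ≡ single (u, v) 1 + zsgn K (dsum ds v * dsum ds u) • single (v, u) 1
      [SMOD idealPair (shRel K ds)] := by
    rw [← tauP_single_add_flip, SModEq.sub_mem, ← map_sub]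
    exact tauP_mem_idealPair (shRel_isHomog ds) (SModEq.sub_mem.1 hcuts)
  rw [funext (lieDelta_eq_sub_tauP (K := K) ds), extL_fun_sub, extL_linearMap]
  exact SModEq.sub_mem.1 (hcuts.trans hflip.symm)

lemma extL_lieDelta_mem_idealPair (ds : ι → ℤ) {x : FM K (List ι)}
    (hx : x ∈ idealOf (shRel K ds)) : extL (lieDelta K ds) x ∈ idealPair (shRel K ds) := by
  refine (Submodule.span_le (p := (idealPair (shRel K ds)).comap (extL (lieDelta K ds)))).2 ?_ hx
  rintro _ ⟨u, v, hu, hv, rfl⟩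
  exact extL_lieDelta_shf_mem ds hu hv

/-! ### Coantisymmetry and the coJacobi identity -/

lemma tauP_lieDeltaCut (ds : ι → ℤ) (p : List ι × List ι) :
    tauP K (dsum ds) (lieDeltaCut ds p) = -lieDeltaCut ds p := by
  rw [lieDeltaCut, map_sub, map_smul, tauP_single, tauP_single, smul_smul, mul_comm (dsum ds p.2),
    zsgn_mul_self, one_smul, neg_sub]

lemma tauP_lieDelta (ds : ι → ℤ) (w : List ι) :
    tauP K (dsum ds) (lieDelta K ds w) = -lieDelta K ds w := by
  rw [lieDelta_eq_fsum, map_fsum, ← neg_one_smul K, smul_fsum]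
  simp only [tauP_lieDeltaCut, neg_one_smul]

lemma tauP_extL_lieDelta (ds : ι → ℤ) (x : FM K (List ι)) :
    tauP K (dsum ds) (extL (lieDelta K ds) x) = -extL (lieDelta K ds) x := by
  rw [← extL_linearMap, ← neg_one_smul K, ← extL_fun_smul]
  simp only [tauP_lieDelta, neg_one_smul]

def cuts3 : List α → List (List α × List α × List α)
  | [] => []
  | x :: w => (cuts w).map (fun q => ([x], q.1, q.2)) ++ (cuts3 w).map (fun t => (x :: t.1, t.2))

lemma cuts_singleton (x : α) : cuts [x] = [] := rfl

lemma fsum_cuts_cuts_fst {M : Type} [AddCommMonoid M] :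
    ∀ (w : List α) (f : List α × List α × List α → M),
      fsum (cuts w) (fun p => fsum (cuts p.1) fun q => f (q.1, q.2, p.2)) = fsum (cuts3 w) f
  | [], _ => rfl
  | [x], _ => rfl
  | x :: y :: w, f => by
    have hp : ∀ p ∈ cuts (y :: w), fsum (cuts (x :: p.1)) (fun q => f (q.1, q.2, p.2))
        = f ([x], p.1, p.2) + fsum (cuts p.1) fun q => f (x :: q.1, q.2, p.2) := fun p hp => by
      rw [cuts_cons x (mem_cuts hp).1, fsum_cons, fsum_map]
    rw [cuts_cons x (List.cons_ne_nil y w), fsum_cons, fsum_map]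
    dsimp only
    rw [cuts_singleton, fsum_congr hp, fsum_add, cuts3, fsum_append, fsum_map, fsum_map,
      fsum_cuts_cuts_fst (y :: w) fun t => f (x :: t.1, t.2)]
    rw [fsum_nil, zero_add]

lemma fsum_cuts_cuts_snd {M : Type} [AddCommMonoid M] :
    ∀ (w : List α) (f : List α × List α × List α → M),
      fsum (cuts w) (fun p => fsum (cuts p.2) fun q => f (p.1, q.1, q.2)) = fsum (cuts3 w) f
  | [], _ => rfl
  | [x], _ => rfl
  | x :: y :: w, f => by
    rw [cuts_cons x (List.cons_ne_nil y w), cuts3, fsum_cons, fsum_map, fsum_append, fsum_map,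
      fsum_map]
    dsimp only
    rw [fsum_cuts_cuts_snd (y :: w) fun t => f (x :: t.1, t.2)]

/-- The contribution of the cutting `w = a b c` to `(δ ⊗ id) δ w`: it comes from the cut
`(a b, c)` of `w` and from the flipped term of the cut `(a, b c)`. -/
def lieDelta2Term (ds : ι → ℤ) (t : List ι × List ι × List ι) : FM K (List ι × List ι × List ι) :=
  mapDomain (fun r => (r.1, r.2, t.2.2)) (lieDeltaCut ds (t.1, t.2.1))
    - zsgn K (dsum ds t.1 * (dsum ds t.2.1 + dsum ds t.2.2)) •
        mapDomain (fun r => (r.1, r.2, t.1)) (lieDeltaCut ds (t.2.1, t.2.2))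

lemma firstT_lieDelta_lieDelta (ds : ι → ℤ) (w : List ι) :
    firstT (lieDelta K ds) (lieDelta K ds w) = fsum (cuts3 w) (lieDelta2Term ds) := by
  have hp : ∀ p ∈ cuts w, firstT (lieDelta K ds) (lieDeltaCut ds p)
      = fsum (cuts p.1) (fun q => mapDomain (fun r => (r.1, r.2, p.2)) (lieDeltaCut ds q))
        - fsum (cuts p.2) (fun q => zsgn K (dsum ds p.1 * (dsum ds q.1 + dsum ds q.2)) •
            mapDomain (fun r => (r.1, r.2, p.1)) (lieDeltaCut ds q)) := by
    intro p hp
    rw [lieDeltaCut, map_sub, map_smul, firstT_single, firstT_single, lieDelta_eq_fsum,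
      lieDelta_eq_fsum, mapDomain_fsum, mapDomain_fsum, smul_fsum]
    refine congrArg _ (fsum_congr fun q hq => ?_)
    rw [← dsum_append, (mem_cuts hq).2.2]
  rw [lieDelta_eq_fsum, map_fsum, fsum_congr hp, fsum_sub,
    fsum_cuts_cuts_fst w fun t =>
      mapDomain (fun r => (r.1, r.2, t.2.2)) (lieDeltaCut ds (t.1, t.2.1)),
    fsum_cuts_cuts_snd w fun t => zsgn K (dsum ds t.1 * (dsum ds t.2.1 + dsum ds t.2.2)) •
      mapDomain (fun r => (r.1, r.2, t.1)) (lieDeltaCut ds (t.2.1, t.2.2)), ← fsum_sub]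
  rfl

lemma lieDelta2Term_add_cyclic (ds : ι → ℤ) (t : List ι × List ι × List ι) :
    lieDelta2Term ds t + tau12 K (dsum ds) (tau23 K (dsum ds) (lieDelta2Term ds t))
      + tau23 K (dsum ds) (tau12 K (dsum ds) (lieDelta2Term ds t)) = 0 := by
  obtain ⟨a, b, c⟩ := t
  simp only [lieDelta2Term, lieDeltaCut, mapDomain_sub, mapDomain_smul, mapDomain_single, map_sub,
    map_smul, tau12_single, tau23_single, mul_add, zsgn_add, mul_comm (dsum ds b) (dsum ds a),
    mul_comm (dsum ds c) (dsum ds a), mul_comm (dsum ds c) (dsum ds b)]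
  have hab := zsgn_mul_self (K := K) (dsum ds a * dsum ds b)
  have hac := zsgn_mul_self (K := K) (dsum ds a * dsum ds c)
  have hbc := zsgn_mul_self (K := K) (dsum ds b * dsum ds c)
  match_scalars <;> grind

lemma coJacobi_lieDelta (ds : ι → ℤ) (w : List ι) :
    firstT (lieDelta K ds) (lieDelta K ds w)
      + tau12 K (dsum ds) (tau23 K (dsum ds) (firstT (lieDelta K ds) (lieDelta K ds w)))
      + tau23 K (dsum ds) (tau12 K (dsum ds) (firstT (lieDelta K ds) (lieDelta K ds w))) = 0 := by
  rw [firstT_lieDelta_lieDelta, map_fsum, map_fsum, map_fsum, map_fsum, ← fsum_add, ← fsum_add,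
    fsum_congr fun t _ => lieDelta2Term_add_cyclic ds t]
  simp [fsum]

lemma coJacobi_extL_lieDelta (ds : ι → ℤ) (x : FM K (List ι)) :
    firstT (lieDelta K ds) (extL (lieDelta K ds) x)
      + tau12 K (dsum ds) (tau23 K (dsum ds) (firstT (lieDelta K ds) (extL (lieDelta K ds) x)))
      + tau23 K (dsum ds) (tau12 K (dsum ds) (firstT (lieDelta K ds) (extL (lieDelta K ds) x)))
      = 0 := by
  let J : FM K (List ι) →ₗ[K] FM K (List ι × List ι × List ι) :=
    (firstT (lieDelta K ds) + tau12 K (dsum ds) ∘ₗ tau23 K (dsum ds) ∘ₗ firstT (lieDelta K ds)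
      + tau23 K (dsum ds) ∘ₗ tau12 K (dsum ds) ∘ₗ firstT (lieDelta K ds)) ∘ₗ extL (lieDelta K ds)
  have hJ : J = 0 := Finsupp.lhom_ext fun w c => by
    simp only [J, LinearMap.comp_apply, LinearMap.add_apply, extL_single, map_smul,
      coJacobi_lieDelta, smul_zero, LinearMap.zero_apply]
  exact LinearMap.congr_fun hJ x

/-- Let `A` be a ℤ-graded vector space (free on a homogeneous
basis `ι` with degrees `d`) and let `H = ⊕_{n≥1} (⊗ⁿ A[1]) / Σ Im(sh_{p,q})` be
the quotient of the reduced tensor module on `A[1]` by the images of all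
shuffle products.  Then the coproduct
`δ(x₁⊗…⊗xₙ) = Σ_j (x₁…x_j)⊗(x_{j+1}…xₙ) − ε_x(τ) (x_{j+1}…xₙ)⊗(x₁…x_j)`
is well defined on `H`, coantisymmetric `τ∘δ = −δ`, and satisfies the coJacobi
identity `(id^{⊗3} + τ₁₂∘τ₂₃ + τ₂₃∘τ₁₂)∘(δ⊗id)∘δ = 0`; that is, `(H, δ)` is
a Lie cogebra. -/
theorem stmt2 (K ι : Type) [Field K] (d : ι → ℤ) :
    -- `ds` is the shifted degree `deg(x) = |x| − 1` on `A[1]`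
    ∀ ds : ι → ℤ, ds = (fun i => d i - 1) →
    -- δ is well defined on the quotient `H`
    ((∀ x ∈ idealOf (shRel K ds), extL (lieDelta K ds) x ∈ idealPair (shRel K ds)) ∧
    -- coantisymmetry : `τ∘δ = −δ`
    (∀ x : FM K (List ι),
      tauP K (dsum ds) (extL (lieDelta K ds) x) + extL (lieDelta K ds) x
        ∈ idealPair (shRel K ds)) ∧
    -- coJacobi : `(id^{⊗3} + τ₁₂∘τ₂₃ + τ₂₃∘τ₁₂)∘(δ⊗id)∘δ = 0`
    (∀ x : FM K (List ι),
      firstT (lieDelta K ds) (extL (lieDelta K ds) x)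
        + tau12 K (dsum ds) (tau23 K (dsum ds)
            (firstT (lieDelta K ds) (extL (lieDelta K ds) x)))
        + tau23 K (dsum ds) (tau12 K (dsum ds)
            (firstT (lieDelta K ds) (extL (lieDelta K ds) x)))
        ∈ idealTriple (shRel K ds))) := by
  intro ds _
  refine ⟨fun x hx => extL_lieDelta_mem_idealPair ds hx, fun x => ?_, fun x => ?_⟩
  · rw [tauP_extL_lieDelta, neg_add_cancel]
    exact Submodule.zero_mem _
  · rw [coJacobi_extL_lieDelta]
    exact Submodule.zero_mem _

end PG
end
end

section
/- Let (𝒢, ∧, ◇) be a graded right pre-Gerstenhaber algebra. Define [α,β] = α◇β − (-1)^{(|α|-1)(|β|-1)} β◇α and α•β = α∧β + (-1)^{|α||β|} β∧α. Then the Leibniz relation [α, β•γ] = [α,β]•γ + (-1)^{|β|(|α|-1)} β•[α,γ] holds (so (𝒢, •, [·,·]) is a Gerstenhaber algebra), and moreover α∧[β,γ] = 0 and [α, β∧γ] = [α,β]∧γ for all homogeneous α, β, γ ∈ 𝒢. -/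
noncomputable section

/-- the sign `(-1)^n` -/
def zsgn (K : Type) [Field K] (n : ℤ) : K := (-1 : K) ^ n

/-- Let `(𝒢, ∧, ◇)` be a graded right pre-Gerstenhaber algebra:
a graded right Zinbiel product `∧` of degree 0, a graded right pre-Lie product `◇`
on `𝒢[1]` of degree −1, with the three compatibility relations.  Setting
`[α,β] = α◇β − (−1)^{(|α|−1)(|β|−1)} β◇α` and `α•β = α∧β + (−1)^{|α||β|} β∧α`,
the Leibniz relation `[α, β•γ] = [α,β]•γ + (−1)^{|β|(|α|−1)} β•[α,γ]` holds,
and moreover `α∧[β,γ] = 0` and `[α, β∧γ] = [α,β]∧γ`, for all homogeneous `α, β, γ`. -/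
theorem stmt10
    (K : Type) [Field K] (G : Type) [AddCommGroup G] [Module K G]
    (𝒢 : ℤ → Submodule K G)
    (wedge diamond : G →ₗ[K] G →ₗ[K] G)
    -- `∧` has degree 0, `◇` has degree −1
    (hwdeg : ∀ (a b : ℤ), ∀ α ∈ 𝒢 a, ∀ β ∈ 𝒢 b, wedge α β ∈ 𝒢 (a + b))
    (hddeg : ∀ (a b : ℤ), ∀ α ∈ 𝒢 a, ∀ β ∈ 𝒢 b, diamond α β ∈ 𝒢 (a + b - 1))
    -- `(𝒢, ∧)` is a graded right Zinbiel algebra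
    (hzinb : ∀ (b c : ℤ), ∀ (α : G), ∀ β ∈ 𝒢 b, ∀ γ ∈ 𝒢 c,
      wedge (wedge α β) γ
        = wedge α (wedge β γ) + zsgn K (b * c) • wedge α (wedge γ β))
    -- `(𝒢[1], ◇)` is a graded right pre-Lie algebra
    (hplie : ∀ (b c : ℤ), ∀ (α : G), ∀ β ∈ 𝒢 b, ∀ γ ∈ 𝒢 c,
      diamond (diamond α β) γ - diamond α (diamond β γ)
        = zsgn K ((b - 1) * (c - 1)) •
            (diamond (diamond α γ) β - diamond α (diamond γ β)))
    -- compatibility relations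
    (hc1 : ∀ (b c : ℤ), ∀ (α : G), ∀ β ∈ 𝒢 b, ∀ γ ∈ 𝒢 c,
      wedge α (diamond β γ) = zsgn K ((b - 1) * (c - 1)) • wedge α (diamond γ β))
    (hc2 : ∀ α β γ : G, diamond α (wedge β γ) = wedge (diamond α β) γ)
    (hc3 : ∀ (b c : ℤ), ∀ (α : G), ∀ β ∈ 𝒢 b, ∀ γ ∈ 𝒢 c,
      wedge (diamond α β) γ = zsgn K ((b - 1) * c) • diamond (wedge α γ) β) :
    ∀ (a b c : ℤ), ∀ α ∈ 𝒢 a, ∀ β ∈ 𝒢 b, ∀ γ ∈ 𝒢 c,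
      -- the Leibniz relation `[α, β•γ] = [α,β]•γ + (−1)^{b(a−1)} β•[α,γ]`
      (diamond α (wedge β γ + zsgn K (b * c) • wedge γ β)
         - zsgn K ((a - 1) * (b + c - 1)) •
             diamond (wedge β γ + zsgn K (b * c) • wedge γ β) α
       = (wedge (diamond α β - zsgn K ((a - 1) * (b - 1)) • diamond β α) γ
           + zsgn K ((a + b - 1) * c) •
               wedge γ (diamond α β - zsgn K ((a - 1) * (b - 1)) • diamond β α))
         + zsgn K (b * (a - 1)) •
           (wedge β (diamond α γ - zsgn K ((a - 1) * (c - 1)) • diamond γ α)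
             + zsgn K (b * (a + c - 1)) •
                 wedge (diamond α γ - zsgn K ((a - 1) * (c - 1)) • diamond γ α) β))
      -- `α ∧ [β,γ] = 0`
      ∧ wedge α (diamond β γ - zsgn K ((b - 1) * (c - 1)) • diamond γ β) = 0
      -- `[α, β∧γ] = [α,β] ∧ γ`
      ∧ diamond α (wedge β γ)
          - zsgn K ((a - 1) * (b + c - 1)) • diamond (wedge β γ) α
          = wedge (diamond α β - zsgn K ((a - 1) * (b - 1)) • diamond β α) γ := by

  intro a b c α hα β hβ γ hγ
  have sadd : ∀ m n : ℤ, zsgn K (m + n) = zsgn K m * zsgn K n := fun m n =>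
    zpow_add₀ (by norm_num) m n
  have stwo : ∀ k : ℤ, zsgn K (2 * k) = 1 := by
    intro k; rw [zsgn, zpow_mul]; norm_num
  have ssq : ∀ n : ℤ, zsgn K n * zsgn K n = 1 := by
    intro n; rw [← sadd, ← two_mul, stwo]
  have skey : ∀ m n k l : ℤ, m + n = k + 2 * l → zsgn K m * zsgn K n = zsgn K k := by
    intro m n k l h; rw [← sadd, h, sadd, stwo, mul_one]
  have P2 : ∀ (b c : ℤ) (α : G), ∀ β ∈ 𝒢 b, ∀ γ ∈ 𝒢 c,
      wedge α (diamond β γ - zsgn K ((b - 1) * (c - 1)) • diamond γ β) = 0 := by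
    intro b c α β hβ γ hγ
    rw [map_sub, map_smul, hc1 b c α β hβ γ hγ, sub_self]
  have P3 : ∀ (b c : ℤ), ∀ β ∈ 𝒢 b, ∀ γ ∈ 𝒢 c,
      diamond α (wedge β γ)
        - zsgn K ((a - 1) * (b + c - 1)) • diamond (wedge β γ) α
        = wedge (diamond α β - zsgn K ((a - 1) * (b - 1)) • diamond β α) γ := by
    intro b c β hβ γ hγ
    have h1 := hc3 a c β α hα γ hγ
    have h2 : diamond (wedge β γ) α = zsgn K ((a - 1) * c) • wedge (diamond β α) γ := by
      rw [h1, smul_smul, ssq, one_smul]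
    have hs : zsgn K ((a - 1) * (b + c - 1)) * zsgn K ((a - 1) * c)
        = zsgn K ((a - 1) * (b - 1)) := skey _ _ _ ((a - 1) * c) (by ring)
    rw [hc2, h2, smul_smul, hs, map_sub, LinearMap.sub_apply, map_smul,
      LinearMap.smul_apply]
  refine ⟨?_, P2 b c α β hβ γ hγ, P3 b c β hβ γ hγ⟩
  have e1 := P3 b c β hβ γ hγ
  have e2 := P3 c b γ hγ β hβ
  rw [show (a - 1) * (c + b - 1) = (a - 1) * (b + c - 1) by ring] at e2
  have z1 : wedge γ (diamond α β - zsgn K ((a - 1) * (b - 1)) • diamond β α) = 0 :=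
    P2 a b γ α hα β hβ
  have z2 : wedge β (diamond α γ - zsgn K ((a - 1) * (c - 1)) • diamond γ α) = 0 :=
    P2 a c β α hα γ hγ
  have hs2 : zsgn K (b * (a - 1)) * zsgn K (b * (a + c - 1)) = zsgn K (b * c) :=
    skey _ _ _ (b * (a - 1)) (by ring)
  rw [z1, z2, smul_zero, add_zero, zero_add, smul_smul, hs2]
  calc diamond α (wedge β γ + zsgn K (b * c) • wedge γ β)
      - zsgn K ((a - 1) * (b + c - 1)) •
          diamond (wedge β γ + zsgn K (b * c) • wedge γ β) α
      = (diamond α (wedge β γ)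
          - zsgn K ((a - 1) * (b + c - 1)) • diamond (wedge β γ) α)
        + zsgn K (b * c) • (diamond α (wedge γ β)
          - zsgn K ((a - 1) * (b + c - 1)) • diamond (wedge γ β) α) := by
        simp only [map_add, map_smul, LinearMap.add_apply, LinearMap.smul_apply]
        module
    _ = _ := by rw [e1, e2]
end
end

section
/- Let (A, ∧, d) be a graded-commutative associative differential graded algebra over a field of characteristic 0, graded by ℕ (e.g., differential forms on a manifold): for homogeneous a of degree k_a, a∧b = (-1)^{k_a k_b} b∧a, ∧ is associative, d has degree +1, d² = 0, and d(a∧b) = da∧b + (-1)^{k_a} a∧db. Regrade A by |a| = k_a + 1 and define a⋏b = (1/|b|) a∧db and a◇b = a∧b. Then (A, ⋏, ◇) is a graded right pre-Gerstenhaber algebra: |⋏| = 0, |◇| = -1, ⋏ satisfies the Zinbiel identity (α⋏β)⋏γ = α⋏(β⋏γ) + (-1)^{|β||γ|} α⋏(γ⋏β), ◇ satisfies the right pre-Lie identity (α◇β)◇γ − α◇(β◇γ) = (-1)^{(|β|-1)(|γ|-1)}((α◇γ)◇β − α◇(γ◇β)), and the compatibilities α⋏(β◇γ) = (-1)^{(|β|-1)(|γ|-1)}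 α⋏(γ◇β), α◇(β⋏γ) = (α◇β)⋏γ, and (α◇β)⋏γ = (-1)^{(|β|-1)|γ|} (α⋏γ)◇β hold. -/
noncomputable section

/-- Let `(A, ∧, d)` be an ℕ-graded graded-commutative associative
differential graded algebra over a field of characteristic 0 (e.g. differential
forms on a manifold).  Regrade `A` by `|a| = k_a + 1` and define
`a⋏b = (1/|b|) a∧db` and `a◇b = a∧b`.  Then `(A, ⋏, ◇)` is a graded right
pre-Gerstenhaber algebra: `|⋏| = 0`, `|◇| = −1`, `⋏` satisfies the right Zinbiel
identity, `◇` satisfies the right pre-Lie identity, and the three compatibility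
relations hold. -/
theorem stmt12
    (K : Type) [Field K] [CharZero K]
    (A : Type) [AddCommGroup A] [Module K A]
    (𝒜 : ℕ → Submodule K A)
    (mul : A →ₗ[K] A →ₗ[K] A) (dA : A →ₗ[K] A)
    -- `∧` has degree 0, `d` has degree +1
    (hmuldeg : ∀ (p q : ℕ), ∀ a ∈ 𝒜 p, ∀ b ∈ 𝒜 q, mul a b ∈ 𝒜 (p + q))
    (hddeg : ∀ (p : ℕ), ∀ a ∈ 𝒜 p, dA a ∈ 𝒜 (p + 1))
    -- graded commutativity and associativity
    (hcomm : ∀ (p q : ℕ), ∀ a ∈ 𝒜 p, ∀ b ∈ 𝒜 q,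
      mul a b = ((-1 : K) ^ (p * q)) • mul b a)
    (hassoc : ∀ a b c : A, mul (mul a b) c = mul a (mul b c))
    -- `d² = 0` and the Leibniz rule
    (hd2 : ∀ a : A, dA (dA a) = 0)
    (hleib : ∀ (p : ℕ), ∀ a ∈ 𝒜 p, ∀ b : A,
      dA (mul a b) = mul (dA a) b + ((-1 : K) ^ p) • mul a (dA b)) :
    -- the regraded degree is `|a| = k_a + 1`; `a⋏b = (1/(k_b+1)) • a∧db`, `a◇b = a∧b`
    -- `|⋏| = 0` : `|a⋏b| = (k_a + k_b + 1) + 1 = |a| + |b|`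
    (∀ (p q : ℕ), ∀ a ∈ 𝒜 p, ∀ b ∈ 𝒜 q,
      (((q : K) + 1)⁻¹) • mul a (dA b) ∈ 𝒜 (p + q + 1)) ∧
    -- `|◇| = −1` : `|a◇b| = (k_a + k_b) + 1 = |a| + |b| − 1`
    (∀ (p q : ℕ), ∀ a ∈ 𝒜 p, ∀ b ∈ 𝒜 q, mul a b ∈ 𝒜 (p + q)) ∧
    -- right Zinbiel identity : `(α⋏β)⋏γ = α⋏(β⋏γ) + (−1)^{|β||γ|} α⋏(γ⋏β)`
    (∀ (p q r : ℕ), ∀ a ∈ 𝒜 p, ∀ b ∈ 𝒜 q, ∀ c ∈ 𝒜 r,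
      (((r : K) + 1)⁻¹) • mul ((((q : K) + 1)⁻¹) • mul a (dA b)) (dA c)
        = (((q : K) + (r : K) + 2)⁻¹) •
            mul a (dA ((((r : K) + 1)⁻¹) • mul b (dA c)))
          + ((-1 : K) ^ ((q + 1) * (r + 1))) •
            ((((q : K) + (r : K) + 2)⁻¹) •
              mul a (dA ((((q : K) + 1)⁻¹) • mul c (dA b))))) ∧
    -- right pre-Lie identity for `◇` (with `|β|−1 = q+1−1 = q` etc.)
    (∀ (p q r : ℕ), ∀ a ∈ 𝒜 p, ∀ b ∈ 𝒜 q, ∀ c ∈ 𝒜 r,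
      mul (mul a b) c - mul a (mul b c)
        = ((-1 : K) ^ (q * r)) • (mul (mul a c) b - mul a (mul c b))) ∧
    -- `α⋏(β◇γ) = (−1)^{(|β|−1)(|γ|−1)} α⋏(γ◇β)`
    (∀ (p q r : ℕ), ∀ a ∈ 𝒜 p, ∀ b ∈ 𝒜 q, ∀ c ∈ 𝒜 r,
      (((q : K) + (r : K) + 1)⁻¹) • mul a (dA (mul b c))
        = ((-1 : K) ^ (q * r)) •
            ((((q : K) + (r : K) + 1)⁻¹) • mul a (dA (mul c b)))) ∧
    -- `α◇(β⋏γ) = (α◇β)⋏γ`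
    (∀ (p q r : ℕ), ∀ a ∈ 𝒜 p, ∀ b ∈ 𝒜 q, ∀ c ∈ 𝒜 r,
      mul a ((((r : K) + 1)⁻¹) • mul b (dA c))
        = (((r : K) + 1)⁻¹) • mul (mul a b) (dA c)) ∧
    -- `(α◇β)⋏γ = (−1)^{(|β|−1)|γ|} (α⋏γ)◇β`
    (∀ (p q r : ℕ), ∀ a ∈ 𝒜 p, ∀ b ∈ 𝒜 q, ∀ c ∈ 𝒜 r,
      (((r : K) + 1)⁻¹) • mul (mul a b) (dA c)
        = ((-1 : K) ^ (q * (r + 1))) •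
            mul ((((r : K) + 1)⁻¹) • mul a (dA c)) b) := by
  refine ⟨?_, hmuldeg, ?_, ?_, ?_, ?_, ?_⟩
  · intro p q a ha b hb
    exact Submodule.smul_mem _ _ (hmuldeg p (q + 1) a ha (dA b) (hddeg q b hb))
  · intro p q r a ha b hb c hc
    have hdb2 : dA (mul b (dA c)) = mul (dA b) (dA c) := by
      simp [hleib q b hb, hd2]
    have hdc2 : dA (mul c (dA b)) = mul (dA c) (dA b) := by
      simp [hleib r c hc, hd2]
    have hcm : mul (dA c) (dA b)
        = ((-1 : K) ^ ((r + 1) * (q + 1))) • mul (dA b) (dA c) :=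
      hcomm (r + 1) (q + 1) _ (hddeg r c hc) _ (hddeg q b hb)
    have hq : ((q : K) + 1) ≠ 0 := Nat.cast_add_one_ne_zero q
    have hr : ((r : K) + 1) ≠ 0 := Nat.cast_add_one_ne_zero r
    have hqr : ((q : K) + (r : K) + 2) ≠ 0 := by
      have := Nat.cast_add_one_ne_zero (R := K) (q + r + 1)
      push_cast at this
      intro h; apply this; linear_combination h
    have hsq : ((-1 : K) ^ ((q + 1) * (r + 1))) * ((-1 : K) ^ ((r + 1) * (q + 1))) = 1 := by
      rw [Nat.mul_comm (r + 1), ← pow_add]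
      exact Even.neg_one_pow ⟨(q + 1) * (r + 1), rfl⟩
    simp only [map_smul, LinearMap.smul_apply, hdb2, hdc2, hcm, hassoc]
    rw [smul_smul, smul_smul, smul_smul, smul_smul, smul_smul, ← add_smul]
    congr 1
    have h2 : ∀ n : ℕ, ((-1 : K)) ^ (n * 2) = 1 := fun n =>
      Even.neg_one_pow ⟨n, by ring⟩
    field_simp
    ring_nf
    simp only [h2, mul_one, one_mul]
    ring
  · intro p q r a ha b hb c hc
    simp [hassoc]
  · intro p q r a ha b hb c hc
    rw [hcomm q r b hb c hc, map_smul, map_smul, smul_comm]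
  · intro p q r a ha b hb c hc
    rw [map_smul, hassoc]
  · intro p q r a ha b hb c hc
    rw [hassoc, hcomm q (r + 1) b hb (dA c) (hddeg r c hc), map_smul, ← hassoc,
      LinearMap.map_smul₂, smul_comm]
end
end
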